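/- arXiv:1610.07693 — 2 statements merged into one kernel-verified Lean document; each statement's English description precedes it below -/
import Mathlib

section
/- Let u and v be independent real Gaussian random variables with u ~ N(0, a) and v ~ N(0, b), where a > 0 and b > 0. Then P( sign(u + v) = sign(u − v) ) = (2/π) · arctan(√(a/b)). -/
open MeasureTheory ProbabilityTheory Real Set

/-- One-bit quantizer: `sgn x = +1` if `x > 0`, and `−1` otherwise. -/
noncomputable def sgn (x : ℝ) : ℝ := if 0 < x then 1 else -1


lemma prod_wd (f g : ℝ → ENNReal) (hf : Measurable f) (hg : Measurable g) :
    (volume.withDensity f).prod (volume.withDensity g)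
      = (volume : Measure (ℝ × ℝ)).withDensity (fun p => f p.1 * g p.2) := by
  ext s hs
  rw [Measure.prod_apply hs, withDensity_apply _ hs,
    lintegral_withDensity_eq_lintegral_mul _ hf (measurable_measure_prodMk_left hs)]
  have h1 : ∀ x : ℝ, (volume.withDensity g) (Prod.mk x ⁻¹' s)
      = ∫⁻ y, s.indicator (fun p : ℝ × ℝ => g p.2) (x, y) := by
    intro x
    rw [withDensity_apply _ (measurable_prodMk_left hs),
      ← lintegral_indicator (measurable_prodMk_left hs) g]
    congr 1
  calc ∫⁻ x, (f * fun x => (volume.withDensity g) (Prod.mk x ⁻¹' s)) x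
      = ∫⁻ x, ∫⁻ y, s.indicator (fun p : ℝ × ℝ => f p.1 * g p.2) (x, y) := by
        congr 1; funext x
        rw [Pi.mul_apply, h1, ← lintegral_const_mul _ (by
          exact (hg.comp measurable_snd).indicator hs |>.comp measurable_prodMk_left)]
        congr 1; funext y
        by_cases hy : (x, y) ∈ s <;> simp [Set.indicator_apply, hy]
    _ = ∫⁻ p, s.indicator (fun p : ℝ × ℝ => f p.1 * g p.2) p ∂(volume.prod volume) := by
        rw [lintegral_prod]
        exact (((hf.comp measurable_fst).mul (hg.comp measurable_snd)).indicator hs).aemeasurable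
    _ = ∫⁻ p in s, f p.1 * g p.2 ∂(volume : Measure (ℝ × ℝ)) := by
        rw [← Measure.volume_eq_prod, lintegral_indicator hs _]

lemma gauss_prod_eq :
    ((gaussianReal 0 1).prod (gaussianReal 0 1)) = (volume : Measure (ℝ × ℝ)).withDensity
      (fun p => ENNReal.ofReal (gaussianPDFReal 0 1 p.1 * gaussianPDFReal 0 1 p.2)) := by
  rw [gaussianReal_of_var_ne_zero _ one_ne_zero,
    prod_wd _ _ (measurable_gaussianPDF 0 1) (measurable_gaussianPDF 0 1)]
  congr 1
  funext p
  exact (ENNReal.ofReal_mul (gaussianPDFReal_nonneg 0 1 p.1)).symm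

lemma measure_eq_integral {s : Set (ℝ × ℝ)} (hs : MeasurableSet s) :
    ((gaussianReal 0 1).prod (gaussianReal 0 1)) s
      = ENNReal.ofReal (∫ p : ℝ × ℝ, s.indicator
          (fun p => gaussianPDFReal 0 1 p.1 * gaussianPDFReal 0 1 p.2) p) := by
  rw [gauss_prod_eq, withDensity_apply _ hs, ← lintegral_indicator hs _]
  rw [ofReal_integral_eq_lintegral_ofReal]
  · congr 1
    funext p
    by_cases hp : p ∈ s <;>
      simp [Set.indicator_apply, hp]
  · refine Integrable.indicator ?_ hs
    rw [Measure.volume_eq_prod]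
    exact (integrable_gaussianPDFReal 0 1).mul_prod (integrable_gaussianPDFReal 0 1)
  · refine Filter.Eventually.of_forall (fun p => ?_)
    by_cases hp : p ∈ s <;>
      simp [Set.indicator_apply, hp, mul_nonneg (gaussianPDFReal_nonneg 0 1 _)
        (gaussianPDFReal_nonneg 0 1 _)]

lemma angle_iff {sa sb : ℝ} (hsa : 0 < sa) (hsb : 0 < sb) {θ : ℝ}
    (hθ : θ ∈ Ioo (-π) π) :
    (sb * Real.sin θ < sa * Real.cos θ ∧ 0 < Real.sin θ) ↔
      θ ∈ Ioo 0 (Real.arctan (sa / sb)) := by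
  constructor
  · rintro ⟨h1, h2⟩
    have hθ0 : 0 < θ := by
      by_contra h
      exact absurd (Real.sin_nonpos_of_nonpos_of_neg_pi_le (not_lt.mp h) hθ.1.le) (not_le.mpr h2)
    have hcos : 0 < Real.cos θ := by
      have hsb2 : (0:ℝ) < sb * Real.sin θ := mul_pos hsb h2
      nlinarith
    have hθ2 : θ < π / 2 := by
      by_contra h
      have := Real.cos_nonpos_of_pi_div_two_le_of_le (not_lt.mp h) (by linarith [hθ.2, Real.pi_pos])
      linarith
    have htan : Real.tan θ < sa / sb := by
      rw [Real.tan_eq_sin_div_cos, div_lt_div_iff₀ hcos hsb]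
      nlinarith
    have := Real.arctan_strictMono htan
    rw [Real.arctan_tan (by linarith [Real.pi_pos]) hθ2] at this
    exact ⟨hθ0, this⟩
  · rintro ⟨h0, h1⟩
    have hα : Real.arctan (sa / sb) < π / 2 := Real.arctan_lt_pi_div_two _
    have hθ2 : θ < π / 2 := h1.trans hα
    have hsin : 0 < Real.sin θ := Real.sin_pos_of_pos_of_lt_pi h0 (by linarith [Real.pi_pos])
    have hcos : 0 < Real.cos θ := Real.cos_pos_of_mem_Ioo ⟨by linarith [Real.pi_pos], hθ2⟩
    have htan : Real.tan θ < sa / sb := by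
      have := Real.tan_lt_tan_of_nonneg_of_lt_pi_div_two h0.le hα h1
      rwa [Real.tan_arctan] at this
    refine ⟨?_, hsin⟩
    rw [Real.tan_eq_sin_div_cos, div_lt_div_iff₀ hcos hsb] at htan
    nlinarith

lemma rad_integral : ∫ r in Ioi (0:ℝ), r * Real.exp (-(1/2) * r ^ 2) = 1 := by
  have hderiv : ∀ x ∈ Ici (0:ℝ),
      HasDerivAt (fun r : ℝ => -Real.exp (-(1/2) * r ^ 2)) (x * Real.exp (-(1/2) * x ^ 2)) x := by
    intro x _
    have h1 : HasDerivAt (fun r : ℝ => -(1/2) * r ^ 2) (-(1/2) * (2 * x ^ 1)) x :=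
      (hasDerivAt_pow 2 x).const_mul _
    have h2 : HasDerivAt (fun r : ℝ => -Real.exp (-(1/2) * r ^ 2))
        (-(Real.exp (-(1/2) * x ^ 2) * (-(1/2) * (2 * x ^ 1)))) x := (h1.exp).neg
    convert h2 using 1
    ring
  have hint : IntegrableOn (fun r : ℝ => r * Real.exp (-(1/2) * r ^ 2)) (Ioi 0) := by
    have := integrableOn_rpow_mul_exp_neg_mul_sq (b := 1/2) (by norm_num) (s := 1) (by norm_num)
    refine this.congr_fun (fun x hx => ?_) measurableSet_Ioi
    simp only [Real.rpow_one]
  have htend : Filter.Tendsto (fun r : ℝ => -Real.exp (-(1/2) * r ^ 2)) Filter.atTop (nhds 0) := by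
    rw [show (0:ℝ) = -0 by ring]
    apply Filter.Tendsto.neg
    apply Real.tendsto_exp_atBot.comp
    exact (Filter.tendsto_pow_atTop two_ne_zero).const_mul_atTop_of_neg (by norm_num)
  have := integral_Ioi_of_hasDerivAt_of_tendsto' hderiv hint htend
  simpa using this

lemma pdf_eq (x : ℝ) :
    gaussianPDFReal 0 1 x = (Real.sqrt (2*π))⁻¹ * Real.exp (-(1/2) * x^2) := by
  unfold gaussianPDFReal
  simp only [NNReal.coe_one, mul_one, sub_zero]
  congr 1
  ring_nf

lemma core {sa sb : ℝ} (hsa : 0 < sa) (hsb : 0 < sb) :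
    ((gaussianReal 0 1).prod (gaussianReal 0 1)) {p : ℝ × ℝ | sb * p.2 < sa * p.1 ∧ 0 < p.2}
      = ENNReal.ofReal (Real.arctan (sa / sb) / (2 * π)) := by
  set α := Real.arctan (sa / sb) with hα
  have hπ := Real.pi_pos
  have hα0 : 0 < α := by
    have h := Real.arctan_strictMono (div_pos hsa hsb)
    rwa [Real.arctan_zero] at h
  have hα2 : α < π / 2 := Real.arctan_lt_pi_div_two _
  set A : Set (ℝ × ℝ) := {p : ℝ × ℝ | sb * p.2 < sa * p.1 ∧ 0 < p.2} with hA
  have hAm : MeasurableSet A :=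
    (measurableSet_lt (measurable_const.mul measurable_snd)
        (measurable_const.mul measurable_fst)).inter
      (measurableSet_lt measurable_const measurable_snd)
  rw [measure_eq_integral hAm]
  congr 1
  rw [← integral_comp_polarCoord_symm]
  have htarget : polarCoord.target = Ioi (0:ℝ) ×ˢ Ioo (-π) π := rfl
  have hcongr : EqOn (fun p : ℝ × ℝ => p.1 •
        A.indicator (fun q => gaussianPDFReal 0 1 q.1 * gaussianPDFReal 0 1 q.2)
          (polarCoord.symm p))
      (fun p : ℝ × ℝ => (p.1 * Real.exp (-(1/2) * p.1 ^ 2)) *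
            ((2 * π)⁻¹ * (Ioo (0:ℝ) α).indicator (fun _ => (1:ℝ)) p.2))
      polarCoord.target := by
    rintro ⟨r, θ⟩ hp
    rw [htarget] at hp
    obtain ⟨hr, hθ⟩ := hp
    simp only [mem_Ioi] at hr
    show r • A.indicator (fun q => gaussianPDFReal 0 1 q.1 * gaussianPDFReal 0 1 q.2)
        (polarCoord.symm (r, θ))
      = r * Real.exp (-(1/2) * r ^ 2) * ((2 * π)⁻¹ * (Ioo (0:ℝ) α).indicator (fun _ => (1:ℝ)) θ)
    have hsymm : polarCoord.symm (r, θ) = (r * Real.cos θ, r * Real.sin θ) := rfl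
    have hmem : polarCoord.symm (r, θ) ∈ A ↔ θ ∈ Ioo 0 α := by
      rw [hsymm, ← angle_iff hsa hsb hθ]
      simp only [hA, mem_setOf_eq]
      constructor
      · rintro ⟨h1, h2⟩
        constructor
        · nlinarith
        · nlinarith
      · rintro ⟨h1, h2⟩
        exact ⟨by nlinarith, by nlinarith⟩
    by_cases hin : θ ∈ Ioo 0 α
    · have hinA : polarCoord.symm (r, θ) ∈ A := hmem.mpr hin
      rw [hsymm] at hinA
      rw [hsymm, Set.indicator_of_mem hinA, Set.indicator_of_mem hin, pdf_eq, pdf_eq]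
      have h2π : (Real.sqrt (2*π))⁻¹ * (Real.sqrt (2*π))⁻¹ = (2*π)⁻¹ := by
        rw [← mul_inv, Real.mul_self_sqrt (by positivity)]
      have hExp : Real.exp (-(1/2) * (r * Real.cos θ)^2) *
          Real.exp (-(1/2) * (r * Real.sin θ)^2) = Real.exp (-(1/2) * r^2) := by
        rw [← Real.exp_add]
        congr 1
        have hs := Real.sin_sq_add_cos_sq θ
        nlinarith
      calc r • ((Real.sqrt (2*π))⁻¹ * Real.exp (-(1/2) * (r * Real.cos θ)^2) *
              ((Real.sqrt (2*π))⁻¹ * Real.exp (-(1/2) * (r * Real.sin θ)^2)))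
          = ((Real.sqrt (2*π))⁻¹ * (Real.sqrt (2*π))⁻¹) *
              (r * (Real.exp (-(1/2) * (r * Real.cos θ)^2) *
                Real.exp (-(1/2) * (r * Real.sin θ)^2))) := by
            rw [smul_eq_mul]; ring
        _ = (2*π)⁻¹ * (r * Real.exp (-(1/2) * r^2)) := by rw [h2π, hExp]
        _ = r * Real.exp (-(1/2) * r^2) * ((2*π)⁻¹ * 1) := by ring
    · have hinA : polarCoord.symm (r, θ) ∉ A := fun h => hin (hmem.mp h)
      rw [hsymm] at hinA
      rw [hsymm, Set.indicator_of_notMem hinA, Set.indicator_of_notMem hin]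
      simp
  rw [setIntegral_congr_fun polarCoord.open_target.measurableSet hcongr, htarget,
    Measure.volume_eq_prod, ← Measure.prod_restrict,
    integral_prod_mul (f := fun r : ℝ => r * Real.exp (-(1/2) * r ^ 2))
      (g := fun θ : ℝ => (2 * π)⁻¹ * (Ioo (0:ℝ) α).indicator (fun _ => (1:ℝ)) θ),
    rad_integral, one_mul,
    integral_const_mul, setIntegral_indicator measurableSet_Ioo,
    inter_eq_right.mpr (Ioo_subset_Ioo (by linarith) (by linarith)),
    setIntegral_const, measureReal_def, Real.volume_Ioo, smul_eq_mul, mul_one, sub_zero,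
    ENNReal.toReal_ofReal hα0.le]
  ring


lemma gauss_singleton (x : ℝ) : gaussianReal 0 1 {x} = 0 :=
  gaussianReal_absolutelyContinuous 0 one_ne_zero (measure_singleton x)

lemma null_of_sections {s : Set (ℝ × ℝ)} (hs : MeasurableSet s)
    (h : ∀ x : ℝ, gaussianReal 0 1 (Prod.mk x ⁻¹' s) = 0) :
    ((gaussianReal 0 1).prod (gaussianReal 0 1)) s = 0 := by
  rw [Measure.prod_apply hs]
  simp [h]

lemma null_line {c d : ℝ} (hd : d ≠ 0) :
    ((gaussianReal 0 1).prod (gaussianReal 0 1)) {p : ℝ × ℝ | c * p.1 + d * p.2 = 0} = 0 := by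
  have hs : MeasurableSet {p : ℝ × ℝ | c * p.1 + d * p.2 = 0} :=
    measurableSet_eq_fun (by fun_prop) measurable_const
  refine null_of_sections hs (fun x => ?_)
  refine measure_mono_null (fun y hy => ?_) (gauss_singleton (-(c * x) / d))
  simp only [mem_preimage, mem_setOf_eq] at hy
  simp only [mem_singleton_iff]
  field_simp
  linarith

lemma null_snd_zero :
    ((gaussianReal 0 1).prod (gaussianReal 0 1)) {p : ℝ × ℝ | p.2 = 0} = 0 := by
  have hs : MeasurableSet {p : ℝ × ℝ | p.2 = 0} :=
    measurableSet_eq_fun measurable_snd measurable_const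
  refine null_of_sections hs (fun x => ?_)
  refine measure_mono_null (fun y hy => ?_) (gauss_singleton 0)
  simpa using hy


lemma gauss_neg : (gaussianReal 0 1).map (fun x : ℝ => -x) = gaussianReal 0 1 := by
  have h := gaussianReal_map_const_mul (μ := 0) (v := 1) (-1 : ℝ)
  have he : (fun x : ℝ => (-1 : ℝ) * x) = fun x : ℝ => -x := by funext x; ring
  rw [he] at h
  rw [h]
  congr 1
  · norm_num
  · ext; norm_num

lemma map_negfst :
    Measure.map (fun p : ℝ × ℝ => (-p.1, p.2)) ((gaussianReal 0 1).prod (gaussianReal 0 1))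
      = (gaussianReal 0 1).prod (gaussianReal 0 1) := by
  have h : (fun p : ℝ × ℝ => (-p.1, p.2)) = Prod.map (fun x : ℝ => -x) (id : ℝ → ℝ) := rfl
  rw [h, ← Measure.map_prod_map _ _ measurable_neg measurable_id, gauss_neg, Measure.map_id]

lemma map_negsnd :
    Measure.map (fun p : ℝ × ℝ => (p.1, -p.2)) ((gaussianReal 0 1).prod (gaussianReal 0 1))
      = (gaussianReal 0 1).prod (gaussianReal 0 1) := by
  have h : (fun p : ℝ × ℝ => (p.1, -p.2)) = Prod.map (id : ℝ → ℝ) (fun x : ℝ => -x) := rfl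
  rw [h, ← Measure.map_prod_map _ _ measurable_id measurable_neg, gauss_neg, Measure.map_id]

lemma sgn_eq_iff (u v : ℝ) :
    (if 0 < u then (1:ℝ) else -1) = (if 0 < v then (1:ℝ) else -1) ↔
      ((0 < u ∧ 0 < v) ∨ (u ≤ 0 ∧ v ≤ 0)) := by
  constructor
  · intro h
    split_ifs at h with h1 h2 h2
    · exact Or.inl ⟨h1, h2⟩
    · norm_num at h
    · norm_num at h
    · push_neg at h1 h2
      exact Or.inr ⟨h1, h2⟩
  · intro h
    split_ifs with h1 h2 h2 <;> try rfl
    · rcases h with ⟨h3, h4⟩ | ⟨h3, h4⟩ <;> [exact absurd h4 h2; linarith]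
    · rcases h with ⟨h3, h4⟩ | ⟨h3, h4⟩ <;> [exact absurd h3 h1; linarith]


lemma gauss_scale {a : ℝ} (ha : 0 < a) :
    (gaussianReal 0 1).map (fun x : ℝ => Real.sqrt a * x) = gaussianReal 0 a.toNNReal := by
  have h := gaussianReal_map_const_mul (μ := 0) (v := 1) (Real.sqrt a)
  rw [show ((Real.sqrt a * ·) : ℝ → ℝ) = fun x => Real.sqrt a * x from rfl] at h
  rw [h]
  congr 1
  · norm_num
  · ext
    simp [Real.sq_sqrt ha.le, Real.coe_toNNReal _ ha.le]


/-- Equation (47): for independent `u ~ N(0,a)` and `v ~ N(0,b)` with `a, b > 0`,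
`P(sign(u + v) = sign(u − v)) = (2/π) arctan(√(a/b))`. -/
theorem sign_agreement_prob (a b : ℝ) (ha : 0 < a) (hb : 0 < b) :
    (gaussianReal 0 a.toNNReal).prod (gaussianReal 0 b.toNNReal)
        {p : ℝ × ℝ | sgn (p.1 + p.2) = sgn (p.1 - p.2)} =
      ENNReal.ofReal (2 / Real.pi * Real.arctan (Real.sqrt (a / b))) := by
  have hπ := Real.pi_pos
  set sa := Real.sqrt a with hsa'
  set sb := Real.sqrt b with hsb'
  have hsa : 0 < sa := Real.sqrt_pos.mpr ha
  have hsb : 0 < sb := Real.sqrt_pos.mpr hb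
  set ν : Measure (ℝ × ℝ) := (gaussianReal 0 1).prod (gaussianReal 0 1) with hν
  set E' : Set (ℝ × ℝ) :=
    {p : ℝ × ℝ | (0 < p.1 + p.2 ∧ 0 < p.1 - p.2) ∨ (p.1 + p.2 ≤ 0 ∧ p.1 - p.2 ≤ 0)} with hE'
  have hEset : {p : ℝ × ℝ | sgn (p.1 + p.2) = sgn (p.1 - p.2)} = E' := by
    rw [hE']; ext p; unfold sgn; exact sgn_eq_iff _ _
  rw [hEset]
  have hE'm : MeasurableSet E' := by
    rw [hE']
    refine MeasurableSet.union (MeasurableSet.inter ?_ ?_) (MeasurableSet.inter ?_ ?_)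
    · exact measurableSet_lt measurable_const (measurable_fst.add measurable_snd)
    · exact measurableSet_lt measurable_const (measurable_fst.sub measurable_snd)
    · exact measurableSet_le (measurable_fst.add measurable_snd) measurable_const
    · exact measurableSet_le (measurable_fst.sub measurable_snd) measurable_const
  have hmap : (gaussianReal 0 a.toNNReal).prod (gaussianReal 0 b.toNNReal)
      = ν.map (fun p : ℝ × ℝ => (sa * p.1, sb * p.2)) := by
    rw [hν, ← gauss_scale ha, ← gauss_scale hb,
      Measure.map_prod_map _ _
        (show Measurable fun x : ℝ => Real.sqrt a * x from measurable_id.const_mul _)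
        (show Measurable fun x : ℝ => Real.sqrt b * x from measurable_id.const_mul _)]
    rfl
  rw [hmap, Measure.map_apply ((measurable_fst.const_mul sa).prodMk
    (measurable_snd.const_mul sb)) hE'm]
  -- invariance helpers
  have hinv1 : ∀ s : Set (ℝ × ℝ), MeasurableSet s →
      ν ((fun p : ℝ × ℝ => (-p.1, p.2)) ⁻¹' s) = ν s := by
    intro s hs
    conv_rhs => rw [hν, ← map_negfst]
    rw [Measure.map_apply (show Measurable fun p : ℝ × ℝ => (-p.1, p.2) from
      measurable_fst.neg.prodMk measurable_snd) hs, hν]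
  have hinv2 : ∀ s : Set (ℝ × ℝ), MeasurableSet s →
      ν ((fun p : ℝ × ℝ => (p.1, -p.2)) ⁻¹' s) = ν s := by
    intro s hs
    conv_rhs => rw [hν, ← map_negsnd]
    rw [Measure.map_apply (measurable_fst.prodMk measurable_snd.neg :
      Measurable fun p : ℝ × ℝ => (p.1, -p.2)) hs, hν]
  -- sets
  set T : Set (ℝ × ℝ) := {p | sb * |p.2| < sa * |p.1|} with hT
  set Tp : Set (ℝ × ℝ) := {p | sb * |p.2| < sa * p.1} with hTp
  set A : Set (ℝ × ℝ) := {p : ℝ × ℝ | sb * p.2 < sa * p.1 ∧ 0 < p.2} with hA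
  set L : Set (ℝ × ℝ) :=
    {p : ℝ × ℝ | sa * p.1 + sb * p.2 = 0} ∪ {p : ℝ × ℝ | sa * p.1 + -sb * p.2 = 0} with hL
  have hTpm : MeasurableSet Tp := by
    rw [hTp]
    exact measurableSet_lt (measurable_snd.abs.const_mul sb) (measurable_fst.const_mul sa)
  have hAm : MeasurableSet A := by
    rw [hA]
    exact (measurableSet_lt (measurable_snd.const_mul sb) (measurable_fst.const_mul sa)).inter
      (measurableSet_lt measurable_const measurable_snd)
  have hLnull : ν L = 0 := by
    rw [hL, hν]
    exact measure_union_null (null_line hsb.ne') (null_line (neg_ne_zero.mpr hsb.ne'))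
  -- step 1 : preimage has same measure as the cone T
  have step1 : ν ((fun p : ℝ × ℝ => (sa * p.1, sb * p.2)) ⁻¹' E') = ν T := by
    have sub2 : T ⊆ (fun p : ℝ × ℝ => (sa * p.1, sb * p.2)) ⁻¹' E' := by
      intro p hp
      simp only [hT, mem_setOf_eq] at hp
      simp only [hE', mem_preimage, mem_setOf_eq]
      rcases abs_cases p.1 with ⟨h1, h2⟩ | ⟨h1, h2⟩ <;>
        rcases abs_cases p.2 with ⟨h3, h4⟩ | ⟨h3, h4⟩ <;>
        rw [h1, h3] at hp
      · exact Or.inl ⟨by nlinarith, by nlinarith⟩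
      · exact Or.inl ⟨by nlinarith, by nlinarith⟩
      · exact Or.inr ⟨by nlinarith, by nlinarith⟩
      · exact Or.inr ⟨by nlinarith, by nlinarith⟩
    have sub1 : (fun p : ℝ × ℝ => (sa * p.1, sb * p.2)) ⁻¹' E' ⊆ T ∪ L := by
      intro p hp
      by_cases hTc : p ∈ T
      · exact Or.inl hTc
      right
      simp only [hT, mem_setOf_eq, not_lt] at hTc
      simp only [hE', mem_preimage, mem_setOf_eq] at hp
      simp only [hL, mem_union, mem_setOf_eq]
      rcases hp with ⟨hp1, hp2⟩ | ⟨hp1, hp2⟩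
      · exfalso
        rcases abs_cases p.2 with ⟨h3, _⟩ | ⟨h3, _⟩ <;> rw [h3] at hTc <;>
          linarith [mul_le_mul_of_nonneg_left (le_abs_self p.1) hsa.le]
      · rcases abs_cases p.2 with ⟨h3, h4⟩ | ⟨h3, h4⟩ <;> rw [h3] at hTc
        · left
          linarith [mul_le_mul_of_nonneg_left (neg_le_abs p.1) hsa.le]
        · right
          linarith [mul_le_mul_of_nonneg_left (neg_le_abs p.1) hsa.le]
    refine le_antisymm ?_ (measure_mono sub2)
    calc ν ((fun p : ℝ × ℝ => (sa * p.1, sb * p.2)) ⁻¹' E') ≤ ν (T ∪ L) := measure_mono sub1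
      _ ≤ ν T + ν L := measure_union_le _ _
      _ = ν T := by rw [hLnull, add_zero]
  rw [step1]
  -- step 2 : split T into two halves
  have step2 : ν T = ν Tp + ν Tp := by
    have hTeq : T = Tp ∪ ((fun p : ℝ × ℝ => (-p.1, p.2)) ⁻¹' Tp) := by
      ext p
      simp only [hT, hTp, mem_setOf_eq, mem_union, mem_preimage]
      constructor
      · intro hp
        rcases abs_cases p.1 with ⟨h1, _⟩ | ⟨h1, _⟩
        · exact Or.inl (by rw [h1] at hp; exact hp)
        · exact Or.inr (by rw [h1] at hp; exact hp)
      · rintro (hp | hp)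
        · nlinarith [le_abs_self p.1]
        · nlinarith [neg_le_abs p.1]
    have hdisj : Disjoint Tp ((fun p : ℝ × ℝ => (-p.1, p.2)) ⁻¹' Tp) := by
      rw [Set.disjoint_left]
      intro p hp1 hp2
      simp only [hTp, mem_setOf_eq, mem_preimage] at hp1 hp2
      nlinarith [abs_nonneg p.2]
    rw [hTeq, measure_union hdisj (hTpm.preimage (measurable_fst.neg.prodMk measurable_snd)),
      hinv1 Tp hTpm]
  rw [step2]
  -- step 3 : split each half into two quadrant pieces
  have step3 : ν Tp = ν A + ν A := by
    set A' : Set (ℝ × ℝ) := (fun p : ℝ × ℝ => (p.1, -p.2)) ⁻¹' A with hA2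
    have hsub : Tp ⊆ (A ∪ A') ∪ {p : ℝ × ℝ | p.2 = 0} := by
      intro p hp
      simp only [hTp, mem_setOf_eq] at hp
      rcases abs_cases p.2 with ⟨h3, h4⟩ | ⟨h3, h4⟩
      · rcases eq_or_lt_of_le h4 with h5 | h5
        · exact Or.inr h5.symm
        · exact Or.inl (Or.inl ⟨by rw [h3] at hp; exact hp, h5⟩)
      · refine Or.inl (Or.inr ?_)
        simp only [hA2, mem_preimage, hA, mem_setOf_eq]
        exact ⟨by rw [h3] at hp; exact hp, by linarith⟩
    have hsub' : A ∪ A' ⊆ Tp := by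
      rintro p (hp | hp)
      · simp only [hA, mem_setOf_eq] at hp
        simp only [hTp, mem_setOf_eq]
        rw [abs_of_pos hp.2]
        exact hp.1
      · simp only [hA2, mem_preimage, hA, mem_setOf_eq] at hp
        simp only [hTp, mem_setOf_eq]
        rw [abs_of_neg (by linarith [hp.2])]
        exact hp.1
    have hdisj : Disjoint A A' := by
      rw [Set.disjoint_left]
      intro p hp1 hp2
      simp only [hA, mem_setOf_eq] at hp1
      simp only [hA2, mem_preimage, hA, mem_setOf_eq] at hp2
      linarith [hp1.2, hp2.2]
    have hnull : ν {p : ℝ × ℝ | p.2 = 0} = 0 := by rw [hν]; exact null_snd_zero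
    have h1 : ν Tp = ν (A ∪ A') := by
      refine le_antisymm ?_ (measure_mono hsub')
      calc ν Tp ≤ ν ((A ∪ A') ∪ {p : ℝ × ℝ | p.2 = 0}) := measure_mono hsub
        _ ≤ ν (A ∪ A') + ν {p : ℝ × ℝ | p.2 = 0} := measure_union_le _ _
        _ = ν (A ∪ A') := by rw [hnull, add_zero]
    rw [h1, measure_union hdisj (hAm.preimage (measurable_fst.prodMk measurable_snd.neg)),
      hA2, hinv2 A hAm]
  rw [step3]
  -- step 4 : value of ν A
  have step4 : ν A = ENNReal.ofReal (Real.arctan (sa / sb) / (2 * π)) := by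
    rw [hν, hA]
    exact core hsa hsb
  rw [step4]
  -- final arithmetic
  have hα0 : 0 < Real.arctan (sa / sb) := by
    have h := Real.arctan_strictMono (div_pos hsa hsb)
    rwa [Real.arctan_zero] at h
  have hq : 0 ≤ Real.arctan (sa / sb) / (2 * π) := by positivity
  rw [← ENNReal.ofReal_add hq hq, ← ENNReal.ofReal_add (by linarith) (by linarith)]
  congr 1
  rw [hsa', hsb', ← Real.sqrt_div ha.le]
  field_simp
  ring
end

section
/- Let N_t ≥ 2, let H ∈ ℂ^{N_r × N_t} be such that every real and imaginary component of H x is nonzero for every x ∈ {−1, +1}^{N_t}, and enumerate the BPSK symbol vectors x_1, …, x_{2^{N_t}} ∈ {−1, +1}^{N_t} so that x_{2^{N_t} − k + 1} = −x_k for all k. Define d_{i,j} = ‖Q_c(H x_i) − Q_c(H x_j)‖_0 and d_min = min_{i ≠ j} d_{i,j}. Then d_min = min_{1 ≤ i < j ≤ 2^{N_t − 1}} min( d_{i,j}, 2N_r − d_{i,j} ). In particular, for every integer n with 0 ≤ n ≤ 2N_r, d_min ≥ n if and only if n ≤ d_{i,j} ≤ 2N_r − n for all 1 ≤ i < j ≤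 2^{N_t − 1}. -/
open Finset

/-- The one-bit quantized noiseless received signal `Q_c(Hx) ∈ {−1,+1}^{2N_r}`,
obtained by applying the componentwise sign to the stacked vector `(Re(Hx), Im(Hx))`. -/
noncomputable def quantRecv (Nr Nt : ℕ) (H : Matrix (Fin Nr) (Fin Nt) ℂ)
    (x : Fin Nt → ℝ) : Fin Nr ⊕ Fin Nr → ℝ :=
  Sum.elim (fun i => sgn ((H.mulVec fun j => (x j : ℂ)) i).re)
    (fun i => sgn ((H.mulVec fun j => (x j : ℂ)) i).im)

/-- Pairwise Hamming distance between quantized received signals. -/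
noncomputable def dHam (Nr Nt : ℕ) (H : Matrix (Fin Nr) (Fin Nt) ℂ)
    (x y : Fin Nt → ℝ) : ℕ :=
  hammingDist (quantRecv Nr Nt H x) (quantRecv Nr Nt H y)

lemma sgn_pm (a : ℝ) : sgn a = 1 ∨ sgn a = -1 := by
  unfold sgn; split <;> simp

lemma sgn_neg' (a : ℝ) (h : a ≠ 0) : sgn (-a) = -sgn a := by
  unfold sgn
  rcases h.lt_or_gt with h | h
  · rw [if_pos (by linarith), if_neg (by linarith)]; ring
  · rw [if_neg (by linarith), if_pos h]

/-- Reduction of the minimum distance to first-half pairs (eqs. (43)–(44)):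
with `x_1, …, x_{2^{N_t}}` an antipodal enumeration of the BPSK vectors
(`x_{rev k} = −x_k`) and `H` such that the real and imaginary components of `Hx` are
nonzero for all BPSK `x`, the minimum distance `d_min = min_{i≠j} d_{i,j}` equals
`min_{1 ≤ i < j ≤ 2^{N_t−1}} min(d_{i,j}, 2N_r − d_{i,j})`; in particular, for
`0 ≤ n ≤ 2N_r`, `d_min ≥ n` iff `n ≤ d_{i,j} ≤ 2N_r − n` for all such pairs. -/
theorem dmin_first_half_reduction (Nr Nt : ℕ) (hNt : 2 ≤ Nt)
    (H : Matrix (Fin Nr) (Fin Nt) ℂ)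
    (hH : ∀ x : Fin Nt → ℝ, (∀ j, x j = 1 ∨ x j = -1) → ∀ i,
      ((H.mulVec fun j => (x j : ℂ)) i).re ≠ 0 ∧
      ((H.mulVec fun j => (x j : ℂ)) i).im ≠ 0)
    (x : Fin (2 ^ Nt) → Fin Nt → ℝ)
    (hxv : ∀ k j, x k j = 1 ∨ x k j = -1)
    (hinj : Function.Injective x)
    (hrev : ∀ k, x k.rev = -x k) :
    sInf {m : ℕ | ∃ i j : Fin (2 ^ Nt), i ≠ j ∧ m = dHam Nr Nt H (x i) (x j)} =
      sInf {m : ℕ | ∃ i j : Fin (2 ^ Nt), (i : ℕ) < (j : ℕ) ∧ (j : ℕ) < 2 ^ (Nt - 1) ∧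
        m = min (dHam Nr Nt H (x i) (x j)) (2 * Nr - dHam Nr Nt H (x i) (x j))} ∧
    ∀ n : ℕ, n ≤ 2 * Nr →
      (n ≤ sInf {m : ℕ | ∃ i j : Fin (2 ^ Nt), i ≠ j ∧ m = dHam Nr Nt H (x i) (x j)} ↔
        ∀ i j : Fin (2 ^ Nt), (i : ℕ) < (j : ℕ) → (j : ℕ) < 2 ^ (Nt - 1) →
          n ≤ dHam Nr Nt H (x i) (x j) ∧ dHam Nr Nt H (x i) (x j) ≤ 2 * Nr - n) := by
  -- notation
  set u : Fin (2 ^ Nt) → (Fin Nr ⊕ Fin Nr) → ℝ := fun k => quantRecv Nr Nt H (x k) with hu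
  have hupm : ∀ k c, u k c = 1 ∨ u k c = -1 := by
    intro k c
    rcases c with i | i <;> exact sgn_pm _
  -- quantizer antipodality
  have hBneg : ∀ k : Fin (2 ^ Nt), u k.rev = -(u k) := by
    intro k
    have hmv : (H.mulVec fun j => ((x k.rev) j : ℂ)) =
        -(H.mulVec fun j => ((x k) j : ℂ)) := by
      rw [hrev,
        show (fun j => (((-(x k)) j : ℝ) : ℂ)) = -(fun j => ((x k j : ℝ) : ℂ)) from by
          funext j; simp,
        Matrix.mulVec_neg]
    funext c
    rcases c with i | i
    · show sgn ((H.mulVec fun j => ((x k.rev) j : ℂ)) i).re = _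
      rw [hmv]
      simp only [Pi.neg_apply, Complex.neg_re]
      exact sgn_neg' _ (hH (x k) (hxv k) i).1
    · show sgn ((H.mulVec fun j => ((x k.rev) j : ℂ)) i).im = _
      rw [hmv]
      simp only [Pi.neg_apply, Complex.neg_im]
      exact sgn_neg' _ (hH (x k) (hxv k) i).2
  have hcard : Fintype.card (Fin Nr ⊕ Fin Nr) = 2 * Nr := by
    simp [Fintype.card_sum]; ring
  -- complement identity
  have hsum : ∀ k l : Fin (2 ^ Nt),
      dHam Nr Nt H (x k) (x l) + dHam Nr Nt H (x k) (x l.rev) = 2 * Nr := by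
    intro k l
    have h2 : dHam Nr Nt H (x k) (x l.rev) = #{c | ¬ u k c ≠ u l c} := by
      show hammingDist (u k) (u l.rev) = _
      rw [hBneg l]
      unfold hammingDist
      congr 1
      apply filter_congr
      intro c _
      rcases hupm k c with h | h <;> rcases hupm l c with h' | h' <;>
        simp [h, h'] <;> norm_num
    show hammingDist (u k) (u l) + _ = _
    rw [hammingDist, h2, Finset.card_filter_add_card_filter_not,
      Finset.card_univ, hcard]
  have hdle : ∀ k l : Fin (2 ^ Nt), dHam Nr Nt H (x k) (x l) ≤ 2 * Nr := by
    intro k l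
    calc dHam Nr Nt H (x k) (x l) ≤ Fintype.card (Fin Nr ⊕ Fin Nr) :=
          hammingDist_le_card_fintype
      _ = 2 * Nr := hcard
  have hcomm : ∀ k l : Fin (2 ^ Nt),
      dHam Nr Nt H (x k) (x l) = dHam Nr Nt H (x l) (x k) := fun k l =>
    hammingDist_comm _ _
  have hdrev : ∀ k l : Fin (2 ^ Nt),
      dHam Nr Nt H (x k.rev) (x l.rev) = dHam Nr Nt H (x k) (x l) := by
    intro k l
    show hammingDist (u k.rev) (u l.rev) = hammingDist (u k) (u l)
    rw [hBneg, hBneg]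
    unfold hammingDist
    congr 1
    apply filter_congr
    intro c _
    simp
  -- arithmetic on indices
  have hpow : 2 ^ Nt = 2 * 2 ^ (Nt - 1) := by
    conv_lhs => rw [show Nt = (Nt - 1) + 1 from by omega]
    rw [pow_succ]; ring
  have hhalf1 : 1 < 2 ^ (Nt - 1) := Nat.one_lt_two_pow (by omega)
  have hrevval : ∀ k : Fin (2 ^ Nt), (k.rev : ℕ) = 2 ^ Nt - (k + 1) := fun k =>
    Fin.val_rev k
  set S1 := {m : ℕ | ∃ i j : Fin (2 ^ Nt), i ≠ j ∧ m = dHam Nr Nt H (x i) (x j)}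
    with hS1
  set S2 := {m : ℕ | ∃ i j : Fin (2 ^ Nt), (i : ℕ) < (j : ℕ) ∧ (j : ℕ) < 2 ^ (Nt - 1) ∧
      m = min (dHam Nr Nt H (x i) (x j)) (2 * Nr - dHam Nr Nt H (x i) (x j))} with hS2
  have i0 : Fin (2 ^ Nt) := ⟨0, by positivity⟩
  have hlt2 : (1 : ℕ) < 2 ^ Nt := by omega
  have hS2ne : S2.Nonempty := by
    refine ⟨_, ⟨0, by omega⟩, ⟨1, hlt2⟩, ?_, ?_, rfl⟩ <;> simpa using by omega
  have hS1ne : S1.Nonempty := by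
    refine ⟨_, ⟨0, by omega⟩, ⟨1, hlt2⟩, ?_, rfl⟩
    exact Fin.ne_of_val_ne (by simp)
  -- first-half pair membership
  have memS2 : ∀ i j : Fin (2 ^ Nt), (i : ℕ) < 2 ^ (Nt - 1) → (j : ℕ) < 2 ^ (Nt - 1) →
      i ≠ j →
      min (dHam Nr Nt H (x i) (x j)) (2 * Nr - dHam Nr Nt H (x i) (x j)) ∈ S2 := by
    intro i j hi hj hne
    rcases Nat.lt_trichotomy (i : ℕ) (j : ℕ) with h | h | h
    · exact ⟨i, j, h, hj, rfl⟩
    · exact absurd (Fin.ext h) hne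
    · exact ⟨j, i, h, hi, by rw [hcomm]⟩
  -- every S2 element bounds sInf S1
  have key1 : ∀ m ∈ S2, sInf S1 ≤ m := by
    rintro m ⟨i, j, hij, hjh, rfl⟩
    have hne : i ≠ j := Fin.ne_of_val_ne (Nat.ne_of_lt hij)
    have h1 : dHam Nr Nt H (x i) (x j) ∈ S1 := ⟨i, j, hne, rfl⟩
    have hjrv : (j.rev : ℕ) = 2 ^ Nt - (j + 1) := hrevval j
    have hne2 : i ≠ j.rev := Fin.ne_of_val_ne (by omega)
    have h2 : 2 * Nr - dHam Nr Nt H (x i) (x j) ∈ S1 := by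
      refine ⟨i, j.rev, hne2, ?_⟩
      have := hsum i j
      omega
    rcases le_total (dHam Nr Nt H (x i) (x j)) (2 * Nr - dHam Nr Nt H (x i) (x j))
      with h | h
    · rw [min_eq_left h]; exact Nat.sInf_le h1
    · rw [min_eq_right h]; exact Nat.sInf_le h2
  -- sInf S2 ≤ 2 * Nr
  have hS2le : sInf S2 ≤ 2 * Nr := by
    obtain ⟨a, b, _, _, hform⟩ := Nat.sInf_mem hS2ne
    rw [hform]
    have := hdle a b
    omega
  -- helper for i in first half, j in second half
  have keyH : ∀ i j : Fin (2 ^ Nt), (i : ℕ) < 2 ^ (Nt - 1) → 2 ^ (Nt - 1) ≤ (j : ℕ) →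
      sInf S2 ≤ dHam Nr Nt H (x i) (x j) := by
    intro i j hi hj
    have hjrv : (j.rev : ℕ) = 2 ^ Nt - (j + 1) := hrevval j
    have hjrh : (j.rev : ℕ) < 2 ^ (Nt - 1) := by omega
    have hdij : dHam Nr Nt H (x i) (x j) = 2 * Nr - dHam Nr Nt H (x i) (x j.rev) := by
      have := hsum i j.rev
      rw [Fin.rev_rev] at this
      omega
    by_cases hiq : i = j.rev
    · rw [hdij, hiq]
      have : dHam Nr Nt H (x j.rev) (x j.rev) = 0 := hammingDist_self _
      omega
    · have hmem := memS2 i j.rev hi hjrh hiq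
      calc sInf S2 ≤ _ := Nat.sInf_le hmem
        _ ≤ 2 * Nr - dHam Nr Nt H (x i) (x j.rev) := min_le_right _ _
        _ = dHam Nr Nt H (x i) (x j) := hdij.symm
  -- every S1 element bounds sInf S2
  have key2 : ∀ m ∈ S1, sInf S2 ≤ m := by
    rintro m ⟨i, j, hne, rfl⟩
    by_cases hi : (i : ℕ) < 2 ^ (Nt - 1) <;> by_cases hj : (j : ℕ) < 2 ^ (Nt - 1)
    · refine le_trans (Nat.sInf_le (memS2 i j hi hj hne)) (min_le_left _ _)
    · exact keyH i j hi (by omega)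
    · rw [hcomm]; exact keyH j i hj (by omega)
    · have hirv := hrevval i
      have hjrv := hrevval j
      rw [← hdrev]
      have hne' : i.rev ≠ j.rev := fun h => hne (Fin.rev_injective h)
      exact le_trans (Nat.sInf_le (memS2 i.rev j.rev (by omega) (by omega) hne'))
        (min_le_left _ _)
  have heq : sInf S1 = sInf S2 := by
    apply le_antisymm
    · exact key1 _ (Nat.sInf_mem hS2ne)
    · exact key2 _ (Nat.sInf_mem hS1ne)
  refine ⟨heq, ?_⟩
  intro n hn
  constructor
  · intro hnle i j hij hjh
    have hne : i ≠ j := Fin.ne_of_val_ne (Nat.ne_of_lt hij)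
    have h1 : n ≤ dHam Nr Nt H (x i) (x j) :=
      le_trans hnle (Nat.sInf_le ⟨i, j, hne, rfl⟩)
    have hjrv := hrevval j
    have hne2 : i ≠ j.rev := Fin.ne_of_val_ne (by omega)
    have h2 : n ≤ dHam Nr Nt H (x i) (x j.rev) :=
      le_trans hnle (Nat.sInf_le ⟨i, j.rev, hne2, rfl⟩)
    have := hsum i j
    exact ⟨h1, by omega⟩
  · intro hall
    rw [heq]
    obtain ⟨a, b, hab, hbh, hform⟩ := Nat.sInf_mem hS2ne
    obtain ⟨h1, h2⟩ := hall a b hab hbh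
    rw [hform]
    have := hdle a b
    omega
end
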